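/- Completeness of the resolution proof system: for every CNF formula Δ, either there exists a model M with M ⊨ Δ, or there exists a natural number n such that Δ ⊢ᵣⁿ ∅ is derivable in the sized resolution proof system (i.e. Δ has a resolution refutation of the empty clause). -/
import Mathlib


/-- A literal: a propositional variable (ℕ) with a sign. -/
structure Lit where
  var : ℕ
  sign : Bool
deriving DecidableEq

/-- The opposite literal. -/
def Lit.neg (l : Lit) : Lit := ⟨l.var, !l.sign⟩

/-- A clause: a finite set of literals, read disjunctively. -/
abbrev Clause := Finset Lit

/-- A CNF formula: a finite set of clauses, read conjunctively. -/
abbrev CNF := Finset Clause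

/-- A valuation: a finite set of literals, read conjunctively. -/
abbrev Valu := Finset Lit

/-- A model: a boolean assignment to literals respecting negation. -/
def IsModel (M : Lit → Bool) : Prop := ∀ l : Lit, M l = true ↔ ¬ (M (Lit.neg l) = true)

/-- `M ⊨ Γ` for a valuation (set of literals) `Γ`. -/
def SatVal (M : Lit → Bool) (Γ : Valu) : Prop := ∀ l ∈ Γ, M l = true

/-- `M ⊨ Δ` for a CNF formula `Δ`. -/
def SatCNF (M : Lit → Bool) (Δ : CNF) : Prop := ∀ C ∈ Δ, ∃ l ∈ C, M l = true

/-- A consistent valuation. -/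
def Consistent (Γ : Valu) : Prop := ∀ l ∈ Γ, Lit.neg l ∉ Γ

/-- The DPLL derivability relation `Γ ⊢ Δ`. -/
inductive DPLL : Valu → CNF → Prop
  | conflict (Γ : Valu) (Δ : CNF) : (∅ : Clause) ∈ Δ → DPLL Γ Δ
  | unit (Γ : Valu) (Δ : CNF) (l : Lit) : ({l} : Clause) ∈ Δ →
      DPLL (insert l Γ) (Δ.erase {l}) → DPLL Γ Δ
  | elim (Γ : Valu) (Δ : CNF) (C : Clause) (l : Lit) : l ∈ Γ → l ∈ C → C ∈ Δ →
      DPLL Γ (Δ.erase C) → DPLL Γ Δ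
  | red (Γ : Valu) (Δ : CNF) (C : Clause) (l : Lit) : l ∈ Γ → Lit.neg l ∈ C → C ∈ Δ →
      DPLL Γ (insert (C.erase (Lit.neg l)) (Δ.erase C)) → DPLL Γ Δ
  | split (Γ : Valu) (Δ : CNF) (l : Lit) :
      DPLL (insert l Γ) Δ → DPLL (insert (Lit.neg l) Γ) Δ → DPLL Γ Δ

/-- The sized DPLL derivability relation `Γ ⊢ⁿ Δ`. -/
inductive DPLLn : Valu → ℕ → CNF → Prop
  | conflict (Γ : Valu) (Δ : CNF) : (∅ : Clause) ∈ Δ → DPLLn Γ 0 Δ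
  | unit (Γ : Valu) (Δ : CNF) (l : Lit) (n : ℕ) : ({l} : Clause) ∈ Δ →
      DPLLn (insert l Γ) n (Δ.erase {l}) → DPLLn Γ (n + 1) Δ
  | elim (Γ : Valu) (Δ : CNF) (C : Clause) (l : Lit) (n : ℕ) : l ∈ Γ → l ∈ C → C ∈ Δ →
      DPLLn Γ n (Δ.erase C) → DPLLn Γ (n + 1) Δ
  | red (Γ : Valu) (Δ : CNF) (C : Clause) (l : Lit) (n : ℕ) : l ∈ Γ → Lit.neg l ∈ C → C ∈ Δ →
      DPLLn Γ n (insert (C.erase (Lit.neg l)) (Δ.erase C)) → DPLLn Γ (n + 1) Δ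
  | split (Γ : Valu) (Δ : CNF) (l : Lit) (n m : ℕ) :
      DPLLn (insert l Γ) n Δ → DPLLn (insert (Lit.neg l) Γ) m Δ → DPLLn Γ (n + m + 1) Δ

/-- The sized resolution derivability relation `Δ ⊢ᵣⁿ C`. -/
inductive Res : CNF → ℕ → Clause → Prop
  | sub (Δ : CNF) (C₀ C : Clause) : C₀ ∈ Δ → C₀ ⊆ C → Res Δ 0 C
  | res (Δ : CNF) (C C' : Clause) (l : Lit) (n m : ℕ) :
      Res Δ n (insert l C) → Res Δ m (insert (Lit.neg l) C') → Res Δ (n + m + 1) (C ∪ C')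

/-- Completeness of the resolution proof system. -/
def cnfVars (Δ : CNF) : Finset ℕ := Δ.sup (fun C => C.image Lit.var)

def assign (v : ℕ) (b : Bool) (Δ : CNF) : CNF :=
  (Δ.filter (fun C => (⟨v, b⟩ : Lit) ∉ C)).image (fun C => C.erase ⟨v, !b⟩)

lemma mem_cnfVars {Δ : CNF} {x : ℕ} :
    x ∈ cnfVars Δ ↔ ∃ C ∈ Δ, ∃ l ∈ C, l.var = x := by
  simp [cnfVars, Finset.mem_sup, Finset.mem_image]

lemma vars_assign (v : ℕ) (b : Bool) (Δ : CNF) :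
    cnfVars (assign v b Δ) ⊆ (cnfVars Δ).erase v := by
  intro x hx
  rw [mem_cnfVars] at hx
  obtain ⟨C', hC', l, hl, rfl⟩ := hx
  simp only [assign, Finset.mem_image, Finset.mem_filter] at hC'
  obtain ⟨C, ⟨hC, hnb⟩, rfl⟩ := hC'
  rw [Finset.mem_erase] at hl
  obtain ⟨hne, hlC⟩ := hl
  refine Finset.mem_erase.2 ⟨?_, mem_cnfVars.2 ⟨C, hC, l, hlC, rfl⟩⟩
  intro h
  rcases Bool.eq_or_eq_not l.sign b with hs | hs
  · exact hnb (by rw [show (⟨v, b⟩ : Lit) = l by cases l; simp_all]; exact hlC)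
  · exact hne (by cases l; simp_all)

lemma sat_of_assign (v : ℕ) (b : Bool) (Δ : CNF) (M : Lit → Bool)
    (hM : IsModel M) (hS : SatCNF M (assign v b Δ)) :
    ∃ M' : Lit → Bool, IsModel M' ∧ SatCNF M' Δ := by
  refine ⟨fun l => if l.var = v then (l.sign == b) else M l, ?_, ?_⟩
  · intro l
    by_cases h : l.var = v
    · simp only [Lit.neg, h, if_pos, if_pos rfl]
      cases l.sign <;> cases b <;> simp
    · simp only [Lit.neg, h, if_neg h, if_neg h]
      exact hM l
  · intro C hC
    by_cases hb : (⟨v, b⟩ : Lit) ∈ C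
    · exact ⟨⟨v, b⟩, hb, by simp⟩
    · have hmem : C.erase ⟨v, !b⟩ ∈ assign v b Δ :=
        Finset.mem_image.2 ⟨C, Finset.mem_filter.2 ⟨hC, hb⟩, rfl⟩
      obtain ⟨l, hl, hlM⟩ := hS _ hmem
      rw [Finset.mem_erase] at hl
      have hv : l.var ≠ v := by
        intro h
        rcases Bool.eq_or_eq_not l.sign b with hs | hs
        · exact hb (by rw [show (⟨v, b⟩ : Lit) = l by cases l; simp_all]; exact hl.2)
        · exact hl.1 (by cases l; simp_all)
      exact ⟨l, hl.2, by simp [hv, hlM]⟩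

lemma lift_res (v : ℕ) (b : Bool) (Δ : CNF) :
    ∀ n C, Res (assign v b Δ) n C →
      ∃ m D, Res Δ m D ∧ D ⊆ insert (⟨v, !b⟩ : Lit) C := by
  intro n C h
  induction h with
  | sub C₀ C hmem hsub =>
    simp only [assign, Finset.mem_image, Finset.mem_filter] at hmem
    obtain ⟨D, ⟨hD, _⟩, rfl⟩ := hmem
    refine ⟨0, D, Res.sub Δ D D hD (subset_refl D), ?_⟩
    intro x hx
    by_cases hxe : x = ⟨v, !b⟩
    · simp [hxe]
    · exact Finset.mem_insert_of_mem (hsub (Finset.mem_erase.2 ⟨hxe, hx⟩))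
  | res C C' l n m h1 h2 ih1 ih2 =>
    obtain ⟨n', D, hD, hDs⟩ := ih1
    obtain ⟨m', D', hD', hD's⟩ := ih2
    by_cases hl : l ∈ D
    · by_cases hl' : Lit.neg l ∈ D'
      · refine ⟨n' + m' + 1, D.erase l ∪ D'.erase (Lit.neg l),
          Res.res Δ _ _ l n' m' (by rwa [Finset.insert_erase hl])
            (by rwa [Finset.insert_erase hl']), ?_⟩
        intro x hx
        rcases Finset.mem_union.1 hx with hx | hx
        · rw [Finset.mem_erase] at hx
          rcases Finset.mem_insert.1 (hDs hx.2) with h | h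
          · simp [h]
          · rcases Finset.mem_insert.1 h with h | h
            · exact absurd h hx.1
            · exact Finset.mem_insert_of_mem (Finset.mem_union_left _ h)
        · rw [Finset.mem_erase] at hx
          rcases Finset.mem_insert.1 (hD's hx.2) with h | h
          · simp [h]
          · rcases Finset.mem_insert.1 h with h | h
            · exact absurd h hx.1
            · exact Finset.mem_insert_of_mem (Finset.mem_union_right _ h)
      · refine ⟨m', D', hD', ?_⟩
        intro x hx
        rcases Finset.mem_insert.1 (hD's hx) with h | h
        · simp [h]
        · rcases Finset.mem_insert.1 h with h | h
          · exact absurd (h ▸ hx) hl'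
          · exact Finset.mem_insert_of_mem (Finset.mem_union_right _ h)
    · refine ⟨n', D, hD, ?_⟩
      intro x hx
      rcases Finset.mem_insert.1 (hDs hx) with h | h
      · simp [h]
      · rcases Finset.mem_insert.1 h with h | h
        · exact absurd (h ▸ hx) hl
        · exact Finset.mem_insert_of_mem (Finset.mem_union_left _ h)

lemma base_case (Δ : CNF) (hv : cnfVars Δ = ∅) :
    (∃ M : Lit → Bool, IsModel M ∧ SatCNF M Δ) ∨ ∃ n : ℕ, Res Δ n (∅ : Clause) := by
  rcases Finset.eq_empty_or_nonempty Δ with rfl | ⟨C, hC⟩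
  · exact Or.inl ⟨fun l => l.sign, fun l => by cases l with
      | mk v s => cases s <;> simp [Lit.neg], fun C hC => absurd hC (by simp)⟩
  · have hCe : C = ∅ := by
      rcases Finset.eq_empty_or_nonempty C with rfl | ⟨l, hl⟩
      · rfl
      · exact absurd (mem_cnfVars.2 ⟨C, hC, l, hl, rfl⟩) (by simp [hv])
    exact Or.inr ⟨0, Res.sub Δ C ∅ hC (by simp [hCe])⟩

lemma main_aux : ∀ (k : ℕ) (Δ : CNF), (cnfVars Δ).card ≤ k →
    (∃ M : Lit → Bool, IsModel M ∧ SatCNF M Δ) ∨ ∃ n : ℕ, Res Δ n (∅ : Clause) := by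
  intro k
  induction k with
  | zero =>
    intro Δ h
    exact base_case Δ (Finset.card_eq_zero.1 (Nat.le_zero.1 h))
  | succ k ih =>
    intro Δ h
    rcases Finset.eq_empty_or_nonempty (cnfVars Δ) with hv | ⟨v, hv⟩
    · exact base_case Δ hv
    · have hcard : ∀ b : Bool, (cnfVars (assign v b Δ)).card ≤ k := by
        intro b
        have h1 := Finset.card_le_card (vars_assign v b Δ)
        have h2 := Finset.card_erase_of_mem hv
        omega
      rcases ih (assign v true Δ) (hcard true) with hsat | ⟨n, hn⟩
      · obtain ⟨M, hM, hS⟩ := hsat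
        exact Or.inl (sat_of_assign v true Δ M hM hS)
      rcases ih (assign v false Δ) (hcard false) with hsat | ⟨m, hm⟩
      · obtain ⟨M, hM, hS⟩ := hsat
        exact Or.inl (sat_of_assign v false Δ M hM hS)
      obtain ⟨n', D, hD, hDs⟩ := lift_res v true Δ n ∅ hn
      obtain ⟨m', D', hD', hD's⟩ := lift_res v false Δ m ∅ hm
      have hDs' : D ⊆ {(⟨v, false⟩ : Lit)} := by simpa using hDs
      have hD's' : D' ⊆ {(⟨v, true⟩ : Lit)} := by simpa using hD's
      rcases Finset.subset_singleton_iff.1 hDs' with rfl | rfl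
      · exact Or.inr ⟨n', hD⟩
      rcases Finset.subset_singleton_iff.1 hD's' with rfl | rfl
      · exact Or.inr ⟨m', hD'⟩
      have hres := Res.res Δ ∅ ∅ ⟨v, false⟩ n' m' (by simpa using hD)
        (by simpa [Lit.neg] using hD')
      exact Or.inr ⟨n' + m' + 1, by simpa using hres⟩

/-- STATEMENT 7 proof. -/
theorem resolution_completeness (Δ : CNF) :
    (∃ M : Lit → Bool, IsModel M ∧ SatCNF M Δ) ∨ ∃ n : ℕ, Res Δ n (∅ : Clause) :=
  main_aux (cnfVars Δ).card Δ le_rfl
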